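/- For every binary vector x ∈ {0,1}^n the augmented Lagrangian dual attains strong duality: φ(x) = inf{ L_a(x,λ,ρ) : λ ∈ ℝ^n, ρ ≥ 0 }, and there exist λ*(x) ∈ ℝ^n and ρ*(x) ≥ 0 such that for every ρ ≥ ρ*(x) and every λ ∈ ℝ^n satisfying λ_i ≥ λ*_i(x) whenever x_i = 1 and λ_i ≤ λ*_i(x) whenever x_i = 0, one has L_a(x,λ,ρ) = φ(x). -/
import Mathlib


open Finset

noncomputable section

/-- A vector is binary if each coordinate is 0 or 1. -/
def IsBin {n : ℕ} (x : Fin n → ℝ) : Prop := ∀ i, x i = 0 ∨ x i = 1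

/-- Multilinear extension of `φ` from `{0,1}^n` to `ℝ^n`. -/
def psi {n : ℕ} (φ : (Fin n → ℝ) → ℝ) (z : Fin n → ℝ) : ℝ :=
  ∑ v : Fin n → Bool,
    φ (fun i => if v i then (1 : ℝ) else 0) * ∏ i, (if v i then z i else 1 - z i)

/-- Penalty term `p(x,z) = Σ x_i + Σ z_i - 2 Σ x_i z_i`. -/
def pen {n : ℕ} (x z : Fin n → ℝ) : ℝ :=
  (∑ i, x i) + (∑ i, z i) - 2 * ∑ i, x i * z i

/-- Augmented Lagrangian `L_a(x,λ,ρ) = sup_{z ∈ [0,1]^n} [ψ(z) - λᵀ(x-z) - ρ·p(x,z)]`. -/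
def La {n : ℕ} (φ : (Fin n → ℝ) → ℝ) (x lam : Fin n → ℝ) (ρ : ℝ) : ℝ :=
  sSup ((fun z => psi φ z - (∑ i, lam i * (x i - z i)) - ρ * pen x z) ''
    Set.Icc (0 : Fin n → ℝ) 1)

-- auxiliary
lemma prod_one_sub_ge {α : Type*} [DecidableEq α] (s : Finset α) (d : α → ℝ)
    (h0 : ∀ i ∈ s, 0 ≤ d i) (h1 : ∀ i ∈ s, d i ≤ 1) :
    1 - ∑ i ∈ s, d i ≤ ∏ i ∈ s, (1 - d i) := by
  induction s using Finset.induction with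
  | empty => simp
  | @insert j s' hj ih =>
    rw [Finset.sum_insert hj, Finset.prod_insert hj]
    have hd0 : 0 ≤ d j := h0 j (Finset.mem_insert_self j s')
    have hd1 : d j ≤ 1 := h1 j (Finset.mem_insert_self j s')
    have ihs := ih (fun i hi => h0 i (Finset.mem_insert_of_mem hi))
      (fun i hi => h1 i (Finset.mem_insert_of_mem hi))
    have hsum : ∑ i ∈ s', d i ≥ 0 := Finset.sum_nonneg fun i hi => h0 i (Finset.mem_insert_of_mem hi)
    nlinarith [ihs]

lemma psi_bin {n : ℕ} (φ : (Fin n → ℝ) → ℝ) (x : Fin n → ℝ) (hx : IsBin x) :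
    psi φ x = φ x := by
  classical
  set b : Fin n → Bool := fun i => if x i = 1 then true else false with hb
  have hxb : (fun i => if b i then (1:ℝ) else 0) = x := by
    funext i
    rcases hx i with h | h <;> simp [hb, h]
  have key : ∀ v : Fin n → Bool,
      (∏ i, (if v i then x i else 1 - x i)) = if v = b then 1 else 0 := by
    intro v
    by_cases hv : v = b
    · subst hv
      rw [if_pos rfl]
      apply Finset.prod_eq_one
      intro i _
      rcases hx i with h | h <;> simp [hb, h]
    · rw [if_neg hv]
      obtain ⟨j, hj⟩ : ∃ j, v j ≠ b j := by
        by_contra h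
        push_neg at h
        exact hv (funext h)
      apply Finset.prod_eq_zero (Finset.mem_univ j)
      rcases hx j with h | h
      · have : b j = false := by simp [hb, h]
        rw [this] at hj
        simp only [ne_eq, Bool.not_eq_false] at hj
        simp [hj, h]
      · have : b j = true := by simp [hb, h]
        rw [this] at hj
        simp only [ne_eq, Bool.not_eq_true] at hj
        simp [hj, h]
  unfold psi
  simp only [key, mul_ite, mul_one, mul_zero]
  rw [Finset.sum_ite_eq' Finset.univ b]
  simp [hxb]

lemma pen_self {n : ℕ} (x : Fin n → ℝ) (hx : IsBin x) : pen x x = 0 := by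
  unfold pen
  have : ∑ i, x i * x i = ∑ i, x i := by
    apply Finset.sum_congr rfl
    intro i _
    rcases hx i with h | h <;> simp [h]
  rw [this]; ring

lemma pen_nonneg {n : ℕ} (x z : Fin n → ℝ) (hx : IsBin x)
    (hz : z ∈ Set.Icc (0 : Fin n → ℝ) 1) : 0 ≤ pen x z := by
  unfold pen
  rw [Finset.mul_sum, ← Finset.sum_add_distrib, ← Finset.sum_sub_distrib]
  apply Finset.sum_nonneg
  intro i _
  have h1 : (0:ℝ) ≤ z i := hz.1 i
  have h2 : z i ≤ 1 := hz.2 i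
  rcases hx i with h | h <;> (rw [h]; nlinarith)

lemma obj_le {n : ℕ} (φ : (Fin n → ℝ) → ℝ) (x : Fin n → ℝ) (hx : IsBin x)
    (lam : Fin n → ℝ) (hlam : ∀ i, (x i = 1 → 0 ≤ lam i) ∧ (x i = 0 → lam i ≤ 0))
    (ρ : ℝ) (hρ : (∑ v : Fin n → Bool, |φ (fun i => if v i then (1:ℝ) else 0)|) ≤ ρ)
    (z : Fin n → ℝ) (hz : z ∈ Set.Icc (0 : Fin n → ℝ) 1) :
    psi φ z - (∑ i, lam i * (x i - z i)) - ρ * pen x z ≤ φ x := by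
  classical
  set M : ℝ := ∑ v : Fin n → Bool, |φ (fun i => if v i then (1:ℝ) else 0)| with hM
  set b : Fin n → Bool := fun i => if x i = 1 then true else false with hb
  have hxb : (fun i => if b i then (1:ℝ) else 0) = x := by
    funext i; rcases hx i with h | h <;> simp [hb, h]
  set d : Fin n → ℝ := fun i => x i + z i - 2 * x i * z i with hd
  have hz0 : ∀ i, (0:ℝ) ≤ z i := fun i => hz.1 i
  have hz1 : ∀ i, z i ≤ 1 := fun i => hz.2 i
  have hd0 : ∀ i, 0 ≤ d i := by
    intro i; rcases hx i with h | h <;> (simp only [hd, h]; nlinarith [hz0 i, hz1 i])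
  have hd1 : ∀ i, d i ≤ 1 := by
    intro i; rcases hx i with h | h <;> (simp only [hd, h]; nlinarith [hz0 i, hz1 i])
  have hpen : pen x z = ∑ i, d i := by
    simp only [pen, hd]
    rw [Finset.mul_sum, ← Finset.sum_add_distrib, ← Finset.sum_sub_distrib]
    exact Finset.sum_congr rfl fun i _ => by ring
  set P : ℝ := pen x z with hP
  have hP0 : 0 ≤ P := pen_nonneg x z hx hz
  have hw0 : ∀ (v : Fin n → Bool) (i : Fin n), (0:ℝ) ≤ (if v i then z i else 1 - z i) := by
    intro v i; by_cases h : v i <;> simp [h] <;> [exact hz0 i; linarith [hz1 i]]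
  have hw1 : ∀ (v : Fin n → Bool) (i : Fin n), (if v i then z i else 1 - z i) ≤ (1:ℝ) := by
    intro v i; by_cases h : v i <;> simp [h] <;> [exact hz1 i; exact hz0 i]
  have hprod0 : ∀ v : Fin n → Bool, 0 ≤ ∏ i, (if v i then z i else 1 - z i) :=
    fun v => Finset.prod_nonneg fun i _ => hw0 v i
  have hprod1 : ∀ v : Fin n → Bool, (∏ i, (if v i then z i else 1 - z i)) ≤ 1 :=
    fun v => Finset.prod_le_one (fun i _ => hw0 v i) (fun i _ => hw1 v i)
  -- product for b
  have hbw : ∀ i, (if b i then z i else 1 - z i) = 1 - d i := by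
    intro i; rcases hx i with h | h <;> simp [hb, hd, h] <;> ring
  have hprodb : 1 - P ≤ ∏ i, (if b i then z i else 1 - z i) := by
    calc 1 - P = 1 - ∑ i, d i := by rw [hpen]
    _ ≤ ∏ i, (1 - d i) := prod_one_sub_ge _ _ (fun i _ => hd0 i) (fun i _ => hd1 i)
    _ = ∏ i, (if b i then z i else 1 - z i) := by
        exact (Finset.prod_congr rfl fun i _ => (hbw i)).symm
  -- product for v ≠ b
  have hprodv : ∀ v : Fin n → Bool, v ≠ b → (∏ i, (if v i then z i else 1 - z i)) ≤ P := by
    intro v hv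
    obtain ⟨j, hj⟩ : ∃ j, v j ≠ b j := by
      by_contra h; push_neg at h; exact hv (funext h)
    have hwj : (if v j then z j else 1 - z j) = d j := by
      rcases hx j with h | h
      · have hbj : b j = false := by simp [hb, h]
        rw [hbj] at hj; simp only [ne_eq, Bool.not_eq_false] at hj
        simp [hj, hd, h]
      · have hbj : b j = true := by simp [hb, h]
        rw [hbj] at hj; simp only [ne_eq, Bool.not_eq_true] at hj
        simp [hj, hd, h]; ring
    calc (∏ i, (if v i then z i else 1 - z i))
        = (if v j then z j else 1 - z j) * ∏ i ∈ Finset.univ.erase j, (if v i then z i else 1 - z i) := by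
          exact (Finset.mul_prod_erase _ _ (Finset.mem_univ j)).symm
      _ ≤ (if v j then z j else 1 - z j) * 1 := by
          apply mul_le_mul_of_nonneg_left _ (hw0 v j)
          exact Finset.prod_le_one (fun i _ => hw0 v i) (fun i _ => hw1 v i)
      _ = d j := by rw [mul_one, hwj]
      _ ≤ ∑ i, d i := Finset.single_le_sum (fun i _ => hd0 i) (Finset.mem_univ j)
      _ = P := hpen.symm
  -- psi bound
  have hpsi : psi φ z ≤ φ x + M * P := by
    unfold psi
    rw [← Finset.add_sum_erase _ _ (Finset.mem_univ b)]
    have h1 : φ (fun i => if b i then (1:ℝ) else 0) * ∏ i, (if b i then z i else 1 - z i)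
        ≤ φ x + |φ x| * P := by
      rw [hxb]
      set q := ∏ i, (if b i then z i else 1 - z i) with hq
      have hq1 : q ≤ 1 := hprod1 b
      have h1q : 1 - q ≤ P := by linarith [hprodb]
      nlinarith [abs_nonneg (φ x), le_abs_self (φ x), neg_abs_le (φ x),
        mul_le_mul_of_nonneg_left h1q (abs_nonneg (φ x)),
        mul_nonneg (sub_nonneg.2 (neg_abs_le (φ x))) (sub_nonneg.2 hq1)]
    have h2 : ∑ v ∈ Finset.univ.erase b,
        φ (fun i => if v i then (1:ℝ) else 0) * ∏ i, (if v i then z i else 1 - z i)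
        ≤ (∑ v ∈ Finset.univ.erase b, |φ (fun i => if v i then (1:ℝ) else 0)|) * P := by
      rw [Finset.sum_mul]
      apply Finset.sum_le_sum
      intro v hv
      calc φ (fun i => if v i then (1:ℝ) else 0) * ∏ i, (if v i then z i else 1 - z i)
          ≤ |φ (fun i => if v i then (1:ℝ) else 0)| * ∏ i, (if v i then z i else 1 - z i) :=
            mul_le_mul_of_nonneg_right (le_abs_self _) (hprod0 v)
        _ ≤ |φ (fun i => if v i then (1:ℝ) else 0)| * P :=
            mul_le_mul_of_nonneg_left (hprodv v (Finset.ne_of_mem_erase hv)) (abs_nonneg _)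
    have hMsplit : M = |φ x| + ∑ v ∈ Finset.univ.erase b, |φ (fun i => if v i then (1:ℝ) else 0)| := by
      rw [hM, ← Finset.add_sum_erase _ _ (Finset.mem_univ b), hxb]
    rw [hMsplit]
    nlinarith [h1, h2]
  have hlin : 0 ≤ ∑ i, lam i * (x i - z i) := by
    apply Finset.sum_nonneg
    intro i _
    rcases hx i with h | h
    · have := (hlam i).2 h; rw [h]; nlinarith [hz0 i]
    · have := (hlam i).1 h; rw [h]; nlinarith [hz1 i]
  have hρP : M * P ≤ ρ * P := mul_le_mul_of_nonneg_right hρ hP0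
  linarith
/-- strong duality of the augmented Lagrangian dual at every binary `x`. -/
theorem augmented_lagrangian_strong_duality (n : ℕ) (hn : 0 < n)
    (φ : (Fin n → ℝ) → ℝ) (x : Fin n → ℝ) (hx : IsBin x) :
    φ x = sInf {v : ℝ | ∃ (lam : Fin n → ℝ) (ρ : ℝ), 0 ≤ ρ ∧ v = La φ x lam ρ} ∧
    ∃ (lamstar : Fin n → ℝ) (ρstar : ℝ), 0 ≤ ρstar ∧
      ∀ (ρ : ℝ), ρstar ≤ ρ → ∀ lam : Fin n → ℝ,
        (∀ i, (x i = 1 → lamstar i ≤ lam i) ∧ (x i = 0 → lam i ≤ lamstar i)) →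
        La φ x lam ρ = φ x := by
  classical
  set M : ℝ := ∑ v : Fin n → Bool, |φ (fun i => if v i then (1:ℝ) else 0)| with hM
  have hM0 : 0 ≤ M := Finset.sum_nonneg fun v _ => abs_nonneg _
  have hxIcc : x ∈ Set.Icc (0 : Fin n → ℝ) 1 := by
    constructor <;> intro i <;> rcases hx i with h | h <;> simp [h]
  -- value at z = x
  have hval : ∀ (lam : Fin n → ℝ) (ρ : ℝ),
      psi φ x - (∑ i, lam i * (x i - x i)) - ρ * pen x x = φ x := by
    intro lam ρ
    rw [psi_bin φ x hx, pen_self x hx]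
    simp
  -- part 2 core
  have hpart2 : ∀ (ρ : ℝ), M ≤ ρ → ∀ lam : Fin n → ℝ,
      (∀ i, (x i = 1 → 0 ≤ lam i) ∧ (x i = 0 → lam i ≤ 0)) →
      La φ x lam ρ = φ x := by
    intro ρ hρ lam hlam
    apply le_antisymm
    · apply csSup_le ((Set.nonempty_of_mem hxIcc).image _)
      rintro v ⟨z, hz, rfl⟩
      exact obj_le φ x hx lam hlam ρ hρ z hz
    · apply le_csSup
      · exact ⟨φ x, by rintro v ⟨z, hz, rfl⟩; exact obj_le φ x hx lam hlam ρ hρ z hz⟩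
      · exact ⟨x, hxIcc, hval lam ρ⟩
  -- lower bound for any (lam, ρ)
  have hlb : ∀ (lam : Fin n → ℝ) (ρ : ℝ), φ x ≤ La φ x lam ρ := by
    intro lam ρ
    have h1 : Continuous fun z : Fin n → ℝ => psi φ z := by
      unfold psi
      apply continuous_finset_sum
      intro v _
      apply Continuous.mul continuous_const
      apply continuous_finset_prod
      intro i _
      by_cases h : v i <;> simp [h] <;> fun_prop
    have h2 : Continuous fun z : Fin n → ℝ => ∑ i, lam i * (x i - z i) := by
      apply continuous_finset_sum; intro i _; fun_prop
    have h3 : Continuous fun z : Fin n → ℝ => ρ * pen x z := by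
      unfold pen
      apply Continuous.mul continuous_const
      apply Continuous.sub
      · apply Continuous.add continuous_const
        apply continuous_finset_sum; intro i _; fun_prop
      · apply Continuous.mul continuous_const
        apply continuous_finset_sum; intro i _; fun_prop
    have hcont : Continuous fun z : Fin n → ℝ =>
        psi φ z - (∑ i, lam i * (x i - z i)) - ρ * pen x z := (h1.sub h2).sub h3
    have hbdd : BddAbove ((fun z => psi φ z - (∑ i, lam i * (x i - z i)) - ρ * pen x z) ''
        Set.Icc (0 : Fin n → ℝ) 1) :=
      (isCompact_Icc.image hcont).bddAbove
    calc φ x = psi φ x - (∑ i, lam i * (x i - x i)) - ρ * pen x x := (hval lam ρ).symm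
      _ ≤ La φ x lam ρ := le_csSup hbdd ⟨x, hxIcc, rfl⟩
  constructor
  · apply le_antisymm
    · have hmem : La φ x 0 M ∈ {v : ℝ | ∃ (lam : Fin n → ℝ) (ρ : ℝ), 0 ≤ ρ ∧ v = La φ x lam ρ} :=
        ⟨0, M, hM0, rfl⟩
      apply le_csInf ⟨_, hmem⟩
      rintro v ⟨lam, ρ, hρ, rfl⟩
      exact hlb lam ρ
    · apply csInf_le
      · exact ⟨φ x, by rintro v ⟨lam, ρ, hρ, rfl⟩; exact hlb lam ρ⟩
      · show φ x ∈ {v : ℝ | ∃ (lam : Fin n → ℝ) (ρ : ℝ), 0 ≤ ρ ∧ v = La φ x lam ρ}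
        refine ⟨0, M, hM0, ?_⟩
        exact (hpart2 M le_rfl 0 (fun i => ⟨fun _ => le_rfl, fun _ => le_rfl⟩)).symm
  · refine ⟨0, M, hM0, ?_⟩
    intro ρ hρ lam hlam
    exact hpart2 ρ hρ lam (fun i => ⟨(hlam i).1, (hlam i).2⟩)
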